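/- arXiv:2105.09774 — 3 statements merged into one kernel-verified Lean document; each statement's English description precedes it below -/
import Mathlib

section
/- Let n, k be integers with 1 ≤ k < 2k ≤ n and n+1 = 3k+p where 0 ≤ p < k, and let L, l, d, r, R, α, β be complex numbers. Then the determinant of the imperfect Toeplitz k,2k-pentadiagonal matrix satisfies D_{n+1,k,2k}^{(α,β)}(L,l,d,r,R) = (d^4 − (α+β)d^3 − (3lr + 2LR − αβ)d^2 + (2Lr^2 + 2Rl^2 + (α+β)(2lr + LR))d + L^2R^2 − 2LRlr + l^2r^2 − (α+β)(Lr^2 + Rl^2) − αβ·lr)^p · (d^3 − (α+β)d^2 − (2lr + LR − αβ)d + Lr^2 + Rl^2 + (α+β)lr)^{k−p}. -/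
/-- Entry function of a `k,2k`-pentadiagonal matrix: the `(i,j)` entry equals `L j` if
`i = j + 2k`, `l j` if `i = j + k`, `d i` if `i = j`, `r i` if `j = i + k`, `R i` if
`j = i + 2k`, and `0` otherwise. -/
def pentaFun (k : ℕ) (L l d r R : ℕ → ℂ) (i j : ℕ) : ℂ :=
  if j + 2 * k = i then L j
  else if j + k = i then l j
  else if i = j then d i
  else if i + k = j then r i
  else if i + 2 * k = j then R i
  else 0

/-- The `m × m` `k,2k`-pentadiagonal matrix `A_{m,k,2k}(L,l,d,r,R)`. -/
def pentaMat (m k : ℕ) (L l d r R : ℕ → ℂ) : Matrix (Fin m) (Fin m) ℂ :=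
  Matrix.of fun i j => pentaFun k L l d r R i j

lemma cancel_mul {k : ℕ} (hk : 0 < k) {j u v : ℕ} (h : j + u * k = j + v * k) : u = v :=
  Nat.eq_of_mul_eq_mul_right hk (by omega)

lemma pentaFun_shift {k : ℕ} (hk : 0 < k) (L l r R : ℂ) (D : ℕ → ℂ) (j a b : ℕ) :
    pentaFun k (fun _ => L) (fun _ => l) D (fun _ => r) (fun _ => R) (j + a * k) (j + b * k) =
      if b + 2 = a then L else if b + 1 = a then l else if a = b then D (j + a * k)
      else if a + 1 = b then r else if a + 2 = b then R else 0 := by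
  unfold pentaFun
  have h1 : (j + b * k + 2 * k = j + a * k) ↔ (b + 2 = a) :=
    ⟨fun h => cancel_mul hk (j := j) (by rw [show (b+2)*k = b*k + 2*k from by ring]; omega),
     fun h => by subst h; ring⟩
  have h2 : (j + b * k + k = j + a * k) ↔ (b + 1 = a) :=
    ⟨fun h => cancel_mul hk (j := j) (by rw [show (b+1)*k = b*k + k from by ring]; omega),
     fun h => by subst h; ring⟩
  have h3 : (j + a * k = j + b * k) ↔ (a = b) :=
    ⟨fun h => cancel_mul hk h, fun h => by rw [h]⟩
  have h4 : (j + a * k + k = j + b * k) ↔ (a + 1 = b) :=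
    ⟨fun h => (cancel_mul hk (j := j) (u := b) (by rw [show (a+1)*k = a*k + k from by ring]; omega)).symm,
     fun h => by subst h; ring⟩
  have h5 : (j + a * k + 2 * k = j + b * k) ↔ (a + 2 = b) :=
    ⟨fun h => (cancel_mul hk (j := j) (u := b) (by rw [show (a+2)*k = a*k + 2*k from by ring]; omega)).symm,
     fun h => by subst h; ring⟩
  simp only [h1, h2, h3, h4, h5]

lemma pentaFun_offblock {k : ℕ} (hk : 0 < k) (L l r R : ℂ) (D : ℕ → ℂ) {j j' : ℕ}
    (hj : j < k) (hj' : j' < k) (hne : j ≠ j') (a b : ℕ) :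
    pentaFun k (fun _ => L) (fun _ => l) D (fun _ => r) (fun _ => R) (j + a * k) (j' + b * k) = 0 := by
  have key : ∀ u v : ℕ, j + u * k ≠ j' + v * k := by
    intro u v h
    apply hne
    have := congrArg (· % k) h
    simpa [Nat.add_mul_mod_self_right, Nat.mod_eq_of_lt hj, Nat.mod_eq_of_lt hj'] using this
  unfold pentaFun
  rw [if_neg (fun h => key a (b+2) (by rw [show (b+2)*k = b*k + 2*k from by ring]; omega)),
    if_neg (fun h => key a (b+1) (by rw [show (b+1)*k = b*k + k from by ring]; omega)),
    if_neg (key a b),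
    if_neg (fun h => key (a+1) b (by rw [show (a+1)*k = a*k + k from by ring]; omega)),
    if_neg (fun h => key (a+2) b (by rw [show (a+2)*k = a*k + 2*k from by ring]; omega))]


open Matrix Finset in
lemma det_fin_four' (A : Matrix (Fin 4) (Fin 4) ℂ) :
    A.det =
      A 0 0 * (A 1 1 * (A 2 2 * A 3 3 - A 2 3 * A 3 2) - A 1 2 * (A 2 1 * A 3 3 - A 2 3 * A 3 1) + A 1 3 * (A 2 1 * A 3 2 - A 2 2 * A 3 1))
    - A 0 1 * (A 1 0 * (A 2 2 * A 3 3 - A 2 3 * A 3 2) - A 1 2 * (A 2 0 * A 3 3 - A 2 3 * A 3 0) + A 1 3 * (A 2 0 * A 3 2 - A 2 2 * A 3 0))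
    + A 0 2 * (A 1 0 * (A 2 1 * A 3 3 - A 2 3 * A 3 1) - A 1 1 * (A 2 0 * A 3 3 - A 2 3 * A 3 0) + A 1 3 * (A 2 0 * A 3 1 - A 2 1 * A 3 0))
    - A 0 3 * (A 1 0 * (A 2 1 * A 3 2 - A 2 2 * A 3 1) - A 1 1 * (A 2 0 * A 3 2 - A 2 2 * A 3 0) + A 1 2 * (A 2 0 * A 3 1 - A 2 1 * A 3 0)) := by
  rw [Matrix.det_succ_row_zero]
  simp only [← Nat.not_even_iff_odd, submatrix_apply, Fin.succ_zero_eq_one,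
    submatrix_submatrix, comp_apply, Fin.succ_one_eq_two,
    Fin.sum_univ_succ, Fin.val_zero, Fin.zero_succAbove, univ_unique, Fin.val_succ,
    Fin.val_eq_zero, Fin.succ_succAbove_zero, sum_singleton, Fin.succ_succAbove_one,
    Matrix.det_fin_three, Fin.default_eq_zero, Even.add_self,
    show Fin.succ (2 : Fin 3) = (3 : Fin 4) by decide,
    show ((1:Fin 3).succAbove 1) = (2 : Fin 3) by decide,
    show ((1:Fin 3).succAbove 0) = (0 : Fin 3) by decide,
    show ((2:Fin 3).succAbove 0) = (0 : Fin 3) by decide,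
    show ((2:Fin 3).succAbove 1) = (1 : Fin 3) by decide,
    show ((2:Fin 3).succ.succAbove 1) = (1 : Fin 4) by decide,
    show ((2:Fin 3).succ.succAbove 2) = (2 : Fin 4) by decide,
    show ((2:Fin 3).succ.succAbove 0) = (0 : Fin 4) by decide,
    show Fin.succAbove (1 : Fin 4) 2 = (3 : Fin 4) by decide,
    show Fin.succAbove (2 : Fin 4) 2 = (3 : Fin 4) by decide,
    show Fin.succAbove (3 : Fin 4) 2 = (2 : Fin 4) by decide]
  norm_num
  ring

lemma det_blk4 (n k p : ℕ) (hk : 1 ≤ k) (h2k : 2 * k ≤ n)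
    (hnp : n + 1 = 3 * k + p) (hpk : p < k) (L l d r R α β : ℂ) (j : ℕ) (hjk : j < k) (hj : j < p) :
    (Matrix.of (fun t t' : Fin 4 => pentaFun k (fun _ => L) (fun _ => l)
        (fun i => if i < k then d - α else if i ≤ n - k then d else d - β)
        (fun _ => r) (fun _ => R) (j + (t : ℕ) * k) (j + (t' : ℕ) * k))).det =
      (d ^ 4 - (α + β) * d ^ 3 - (3 * l * r + 2 * L * R - α * β) * d ^ 2
          + (2 * L * r ^ 2 + 2 * R * l ^ 2 + (α + β) * (2 * l * r + L * R)) * d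
          + L ^ 2 * R ^ 2 - 2 * L * R * l * r + l ^ 2 * r ^ 2
          - (α + β) * (L * r ^ 2 + R * l ^ 2) - α * β * (l * r)) := by
  have hk0 : 0 < k := hk
  rw [det_fin_four']
  simp only [Matrix.of_apply,
    show ((0 : Fin 4) : ℕ) = 0 from rfl, show ((1 : Fin 4) : ℕ) = 1 from rfl,
    show ((2 : Fin 4) : ℕ) = 2 from rfl, show ((3 : Fin 4) : ℕ) = 3 from rfl,
    pentaFun_shift hk0, zero_mul, one_mul, add_zero]
  norm_num
  simp only [eq_true hjk, eq_true (show j + k ≤ n - k by omega),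
    eq_false (show ¬ j + k < k by omega),
    eq_false (show ¬ j + 2*k < k by omega), eq_true (show j + 2*k ≤ n - k by omega),
    eq_false (show ¬ j + 3*k < k by omega), eq_false (show ¬ j + 3*k ≤ n - k by omega),
    if_true, if_false]
  ring

lemma det_blk3 (n k p : ℕ) (hk : 1 ≤ k) (h2k : 2 * k ≤ n)
    (hnp : n + 1 = 3 * k + p) (hpk : p < k) (L l d r R α β : ℂ) (j : ℕ) (hjk : j < k) (hj : p ≤ j) :
    (Matrix.of (fun t t' : Fin 3 => pentaFun k (fun _ => L) (fun _ => l)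
        (fun i => if i < k then d - α else if i ≤ n - k then d else d - β)
        (fun _ => r) (fun _ => R) (j + (t : ℕ) * k) (j + (t' : ℕ) * k))).det =
      (d ^ 3 - (α + β) * d ^ 2 - (2 * l * r + L * R - α * β) * d
          + L * r ^ 2 + R * l ^ 2 + (α + β) * (l * r)) := by
  have hk0 : 0 < k := hk
  rw [Matrix.det_fin_three]
  simp only [Matrix.of_apply,
    show ((0 : Fin 3) : ℕ) = 0 from rfl, show ((1 : Fin 3) : ℕ) = 1 from rfl,
    show ((2 : Fin 3) : ℕ) = 2 from rfl,
    pentaFun_shift hk0, zero_mul, one_mul, add_zero]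
  norm_num
  simp only [eq_true hjk, eq_true (show j + k ≤ n - k by omega),
    eq_false (show ¬ j + k < k by omega),
    eq_false (show ¬ j + 2*k < k by omega), eq_false (show ¬ j + 2*k ≤ n - k by omega),
    if_true, if_false]
  ring

/-- Theorem 7: the determinant of the imperfect Toeplitz `k,2k`-pentadiagonal matrix
`A_{n+1,k,2k}^{(α,β)}(L,l,d,r,R)` (diagonal `d - α` on the first `k` entries, `d` in the
middle, `d - β` on the last `k` entries) for `n + 1 = 3k + p`, `0 ≤ p < k`. -/
theorem det_imperfect_toeplitz_q_eq_three (n k p : ℕ) (hk : 1 ≤ k) (h2k : 2 * k ≤ n)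
    (hnp : n + 1 = 3 * k + p) (hpk : p < k) (L l d r R α β : ℂ) :
    (pentaMat (n + 1) k (fun _ => L) (fun _ => l)
        (fun i => if i < k then d - α else if i ≤ n - k then d else d - β)
        (fun _ => r) (fun _ => R)).det =
      (d ^ 4 - (α + β) * d ^ 3 - (3 * l * r + 2 * L * R - α * β) * d ^ 2
          + (2 * L * r ^ 2 + 2 * R * l ^ 2 + (α + β) * (2 * l * r + L * R)) * d
          + L ^ 2 * R ^ 2 - 2 * L * R * l * r + l ^ 2 * r ^ 2
          - (α + β) * (L * r ^ 2 + R * l ^ 2) - α * β * (l * r)) ^ p *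
      (d ^ 3 - (α + β) * d ^ 2 - (2 * l * r + L * R - α * β) * d
          + L * r ^ 2 + R * l ^ 2 + (α + β) * (l * r)) ^ (k - p) := by
  have hk0 : 0 < k := hk
  have hb4 : ∀ x : Fin 4 × Fin p, (x.2 : ℕ) + (x.1 : ℕ) * k < n + 1 := by
    intro x
    have ht := x.1.isLt
    have hj := x.2.isLt
    have h3 : (x.1 : ℕ) * k ≤ 3 * k := Nat.mul_le_mul_right k (by omega)
    omega
  have hb3 : ∀ x : Fin 3 × Fin (k - p), p + (x.2 : ℕ) + (x.1 : ℕ) * k < n + 1 := by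
    intro x
    have ht := x.1.isLt
    have hj := x.2.isLt
    have h3 : (x.1 : ℕ) * k ≤ 2 * k := Nat.mul_le_mul_right k (by omega)
    omega
  have hmodk : ∀ {u v a b : ℕ}, u < k → v < k → u + a * k = v + b * k → u = v ∧ a = b := by
    intro u v a b hu hv h
    have h1 : u = v := by
      have := congrArg (· % k) h
      simpa [Nat.add_mul_mod_self_right, Nat.mod_eq_of_lt hu, Nat.mod_eq_of_lt hv] using this
    exact ⟨h1, cancel_mul hk0 (j := u) (by omega)⟩
  set f : (Fin 4 × Fin p) ⊕ (Fin 3 × Fin (k - p)) → Fin (n + 1) :=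
    Sum.elim (fun x => ⟨(x.2 : ℕ) + (x.1 : ℕ) * k, hb4 x⟩)
      (fun x => ⟨p + (x.2 : ℕ) + (x.1 : ℕ) * k, hb3 x⟩) with hf
  have hinj : Function.Injective f := by
    rintro (⟨t, j⟩ | ⟨t, j⟩) (⟨t', j'⟩ | ⟨t', j'⟩) h
    · have h' : (j : ℕ) + (t : ℕ) * k = (j' : ℕ) + (t' : ℕ) * k := congrArg Fin.val h
      obtain ⟨h1, h2⟩ := hmodk (by have := j.isLt; omega) (by have := j'.isLt; omega) h'
      exact congrArg Sum.inl (Prod.ext (Fin.ext h2) (Fin.ext h1))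
    · have h' : (j : ℕ) + (t : ℕ) * k = p + (j' : ℕ) + (t' : ℕ) * k := congrArg Fin.val h
      obtain ⟨h1, h2⟩ := hmodk (by have := j.isLt; omega) (by have := j'.isLt; omega) h'
      have := j.isLt
      omega
    · have h' : p + (j : ℕ) + (t : ℕ) * k = (j' : ℕ) + (t' : ℕ) * k := congrArg Fin.val h
      obtain ⟨h1, h2⟩ := hmodk (by have := j.isLt; omega) (by have := j'.isLt; omega) h'
      have := j'.isLt
      omega
    · have h' : p + (j : ℕ) + (t : ℕ) * k = p + (j' : ℕ) + (t' : ℕ) * k := congrArg Fin.val h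
      obtain ⟨h1, h2⟩ := hmodk (by have := j.isLt; omega) (by have := j'.isLt; omega) h'
      have hjj : (j : ℕ) = (j' : ℕ) := by omega
      exact congrArg Sum.inr (Prod.ext (Fin.ext h2) (Fin.ext hjj))
  have hcard : Fintype.card ((Fin 4 × Fin p) ⊕ (Fin 3 × Fin (k - p)))
      = Fintype.card (Fin (n + 1)) := by
    simp only [Fintype.card_sum, Fintype.card_prod, Fintype.card_fin]
    omega
  have hbij : Function.Bijective f := (Fintype.bijective_iff_injective_and_card f).2 ⟨hinj, hcard⟩
  set e := Equiv.ofBijective f hbij with he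
  rw [← Matrix.det_submatrix_equiv_self e]
  have hsub : (pentaMat (n + 1) k (fun _ => L) (fun _ => l)
        (fun i => if i < k then d - α else if i ≤ n - k then d else d - β)
        (fun _ => r) (fun _ => R)).submatrix e e
      = Matrix.fromBlocks
          (Matrix.blockDiagonal fun j : Fin p =>
            Matrix.of fun t t' : Fin 4 => pentaFun k (fun _ => L) (fun _ => l)
              (fun i => if i < k then d - α else if i ≤ n - k then d else d - β)
              (fun _ => r) (fun _ => R) ((j : ℕ) + (t : ℕ) * k) ((j : ℕ) + (t' : ℕ) * k))
          0 0
          (Matrix.blockDiagonal fun j : Fin (k - p) =>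
            Matrix.of fun t t' : Fin 3 => pentaFun k (fun _ => L) (fun _ => l)
              (fun i => if i < k then d - α else if i ≤ n - k then d else d - β)
              (fun _ => r) (fun _ => R) (p + (j : ℕ) + (t : ℕ) * k) (p + (j : ℕ) + (t' : ℕ) * k)) := by
    ext x y
    rcases x with ⟨t, j⟩ | ⟨t, j⟩ <;> rcases y with ⟨t', j'⟩ | ⟨t', j'⟩ <;>
      simp only [Matrix.submatrix_apply, he, Equiv.ofBijective_apply, hf,
        Sum.elim_inl, Sum.elim_inr, pentaMat, Matrix.of_apply,
        Matrix.fromBlocks_apply₁₁, Matrix.fromBlocks_apply₁₂,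
        Matrix.fromBlocks_apply₂₁, Matrix.fromBlocks_apply₂₂, Matrix.zero_apply]
    · rcases eq_or_ne j j' with rfl | hne
      · rw [Matrix.blockDiagonal_apply_eq]
        rfl
      · rw [Matrix.blockDiagonal_apply_ne _ _ _ hne]
        exact pentaFun_offblock hk0 _ _ _ _ _ (by have := j.isLt; omega)
          (by have := j'.isLt; omega) (fun hc => hne (Fin.ext hc)) t t'
    · have : (p + (j' : ℕ) + (t' : ℕ) * k) = ((p + (j' : ℕ)) + (t' : ℕ) * k) := by omega
      rw [this]
      exact pentaFun_offblock hk0 _ _ _ _ _ (by have := j.isLt; omega)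
        (by have := j'.isLt; omega) (by have := j.isLt; omega) t t'
    · have : (p + (j : ℕ) + (t : ℕ) * k) = ((p + (j : ℕ)) + (t : ℕ) * k) := by omega
      rw [this]
      exact pentaFun_offblock hk0 _ _ _ _ _ (by have := j.isLt; omega)
        (by have := j'.isLt; omega) (by have := j'.isLt; omega) t t'
    · rcases eq_or_ne j j' with rfl | hne
      · rw [Matrix.blockDiagonal_apply_eq]
        rfl
      · rw [Matrix.blockDiagonal_apply_ne _ _ _ hne]
        have e1 : (p + (j : ℕ) + (t : ℕ) * k) = ((p + (j : ℕ)) + (t : ℕ) * k) := by omega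
        have e2 : (p + (j' : ℕ) + (t' : ℕ) * k) = ((p + (j' : ℕ)) + (t' : ℕ) * k) := by omega
        rw [e1, e2]
        exact pentaFun_offblock hk0 _ _ _ _ _ (by have := j.isLt; omega)
          (by have := j'.isLt; omega) (fun hc => hne (Fin.ext (by omega))) t t'
  rw [hsub, Matrix.det_fromBlocks_zero₂₁, Matrix.det_blockDiagonal, Matrix.det_blockDiagonal]
  have h4 : ∀ j : Fin p,
      (Matrix.of fun t t' : Fin 4 => pentaFun k (fun _ => L) (fun _ => l)
        (fun i => if i < k then d - α else if i ≤ n - k then d else d - β)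
        (fun _ => r) (fun _ => R) ((j : ℕ) + (t : ℕ) * k) ((j : ℕ) + (t' : ℕ) * k)).det =
      (d ^ 4 - (α + β) * d ^ 3 - (3 * l * r + 2 * L * R - α * β) * d ^ 2
          + (2 * L * r ^ 2 + 2 * R * l ^ 2 + (α + β) * (2 * l * r + L * R)) * d
          + L ^ 2 * R ^ 2 - 2 * L * R * l * r + l ^ 2 * r ^ 2
          - (α + β) * (L * r ^ 2 + R * l ^ 2) - α * β * (l * r)) :=
    fun j => det_blk4 n k p hk h2k hnp hpk L l d r R α β j
      (by have := j.isLt; omega) j.isLt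
  have h3 : ∀ j : Fin (k - p),
      (Matrix.of fun t t' : Fin 3 => pentaFun k (fun _ => L) (fun _ => l)
        (fun i => if i < k then d - α else if i ≤ n - k then d else d - β)
        (fun _ => r) (fun _ => R) (p + (j : ℕ) + (t : ℕ) * k) (p + (j : ℕ) + (t' : ℕ) * k)).det =
      (d ^ 3 - (α + β) * d ^ 2 - (2 * l * r + L * R - α * β) * d
          + L * r ^ 2 + R * l ^ 2 + (α + β) * (l * r)) :=
    fun j => det_blk3 n k p hk h2k hnp hpk L l d r R α β (p + j)
      (by have := j.isLt; omega) (by omega)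
  simp only [h4, h3, Finset.prod_const, Finset.card_univ, Fintype.card_fin]
end

section
/- Let n, k be integers with 1 ≤ k < 2k ≤ n, write n+1 = kq+p with 0 ≤ p < k, and let L, l, d, r, R be complex numbers. Then P_σ · A_{n+1,k,2k}(L,l,d,r,R) · P_σ^T equals the block-diagonal direct sum of p copies of the (q+1)×(q+1) Toeplitz 1,2-pentadiagonal matrix A_{q+1,1,2}(L,l,d,r,R) followed by k−p copies of the q×q Toeplitz 1,2-pentadiagonal matrix A_{q,1,2}(L,l,d,r,R). -/
/-- The Egerváry–Szász permutation `σ` of `{0, …, n}` (for `n + 1 = kq + p`, `0 ≤ p < k`):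
`σ(s + j(q+1)) = sk + j` for `0 ≤ j ≤ p - 1`, `0 ≤ s ≤ q`, and
`σ(s + p + jq) = sk + j` for `p ≤ j ≤ k - 1`, `0 ≤ s ≤ q - 1`. -/
def sigmaES (k q p i : ℕ) : ℕ :=
  if i < p * (q + 1) then (i % (q + 1)) * k + i / (q + 1)
  else ((i - p * (q + 1)) % q) * k + (p + (i - p * (q + 1)) / q)

/-- The permutation matrix `P_σ`, with `(i,j)` entry `1` if `j = σ(i)` and `0` otherwise. -/
def Pmat (n k q p : ℕ) : Matrix (Fin (n + 1)) (Fin (n + 1)) ℂ :=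
  Matrix.of fun i j => if (j : ℕ) = sigmaES k q p (i : ℕ) then 1 else 0

/-- The index of the diagonal block (of the direct sum
`(⊕_{j<p} A^{(j)}_{q+1,1,2}) ⊕ (⊕_{p ≤ j < k} A^{(j)}_{q,1,2})`) containing position `i`:
the first `p` blocks have size `q + 1`, the remaining ones size `q`. -/
def blockIdx (q p i : ℕ) : ℕ :=
  if i < p * (q + 1) then i / (q + 1) else p + (i - p * (q + 1)) / q

/-- The position of index `i` inside its diagonal block. -/
def locIdx (q p i : ℕ) : ℕ :=
  if i < p * (q + 1) then i % (q + 1) else (i - p * (q + 1)) % q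


lemma sigma_eq (k q p i : ℕ) :
    sigmaES k q p i = locIdx q p i * k + blockIdx q p i := by
  unfold sigmaES locIdx blockIdx
  split_ifs <;> rfl

lemma block_lt (k q p i : ℕ) (hq : 1 ≤ q) (hpk : p < k) (hi : i < k * q + p) :
    blockIdx q p i < k := by
  unfold blockIdx
  split_ifs with h
  · have := (Nat.div_lt_iff_lt_mul (by omega : 0 < q + 1)).2 h
    omega
  · push_neg at h
    have key : i - p * (q + 1) < (k - p) * q := by
      zify [h, hpk.le]
      have hi' : (i : ℤ) < k * q + p := by exact_mod_cast hi
      have h' : (p : ℤ) * (q + 1) ≤ i := by exact_mod_cast h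
      nlinarith
    have := (Nat.div_lt_iff_lt_mul (by omega : 0 < q)).2 key
    omega

lemma sigma_lt (k q p i : ℕ) (hq : 1 ≤ q) (hpk : p < k) (hi : i < k * q + p) :
    sigmaES k q p i < k * q + p := by
  rw [sigma_eq]
  unfold locIdx blockIdx
  split_ifs with h
  · have ha : i % (q + 1) ≤ q := by
      have := Nat.mod_lt i (by omega : 0 < q + 1); omega
    have hb : i / (q + 1) < p := (Nat.div_lt_iff_lt_mul (by omega : 0 < q + 1)).2 h
    have h1 : i % (q + 1) * k ≤ q * k := Nat.mul_le_mul_right k ha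
    have h2 : k * q = q * k := Nat.mul_comm k q
    linarith
  · push_neg at h
    have ha : (i - p * (q + 1)) % q < q := Nat.mod_lt _ (by omega)
    have hb : p + (i - p * (q + 1)) / q < k := by
      have := block_lt k q p i hq hpk hi
      unfold blockIdx at this
      rw [if_neg (by omega)] at this
      exact this
    have h1 : ((i - p * (q + 1)) % q + 1) * k ≤ q * k :=
      Nat.mul_le_mul_right k (by omega)
    have h2 : ((i - p * (q + 1)) % q + 1) * k = (i - p * (q + 1)) % q * k + k := by ring
    have h3 : k * q = q * k := Nat.mul_comm k q
    linarith

lemma key_iff (k : ℕ) (hk : 1 ≤ k) {x y u v : ℕ} (hu : u < k) (hv : v < k) :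
    x * k + u = y * k + v ↔ x = y ∧ u = v := by
  constructor
  · intro h
    have h1 : u = v := by
      have h2 := congrArg (· % k) h
      simpa [Nat.mul_add_mod', Nat.mod_eq_of_lt hu, Nat.mod_eq_of_lt hv] using h2
    subst h1
    have h3 : x * k = y * k := by omega
    exact ⟨Nat.eq_of_mul_eq_mul_right (by omega) h3, rfl⟩
  · rintro ⟨rfl, rfl⟩; rfl

lemma penta_split (k a b a' b' : ℕ) (hk : 1 ≤ k) (hb : b < k) (hb' : b' < k)
    (L l d r R : ℂ) :
    pentaFun k (fun _ => L) (fun _ => l) (fun _ => d) (fun _ => r) (fun _ => R)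
        (a * k + b) (a' * k + b') =
      if b = b' then
        pentaFun 1 (fun _ => L) (fun _ => l) (fun _ => d) (fun _ => r) (fun _ => R) a a'
      else 0 := by
  unfold pentaFun
  rw [show a' * k + b' + 2 * k = (a' + 2) * k + b' by ring,
      show a' * k + b' + k = (a' + 1) * k + b' by ring,
      show a * k + b + k = (a + 1) * k + b by ring,
      show a * k + b + 2 * k = (a + 2) * k + b by ring]
  simp only [key_iff k hk hb' hb, key_iff k hk hb hb']
  by_cases hbb : b = b'
  · subst hbb
    simp [mul_one, and_true]
  · simp [hbb, Ne.symm hbb]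

open Matrix in
lemma Pmat_mul (n k q p : ℕ) (hσ : ∀ i : Fin (n + 1), sigmaES k q p (i : ℕ) < n + 1)
    (M : Matrix (Fin (n + 1)) (Fin (n + 1)) ℂ) (i j : Fin (n + 1)) :
    (Pmat n k q p * M * (Pmat n k q p)ᵀ) i j =
      M ⟨sigmaES k q p (i : ℕ), hσ i⟩ ⟨sigmaES k q p (j : ℕ), hσ j⟩ := by
  have h1 : ∀ t, (Pmat n k q p * M) i t = M ⟨sigmaES k q p (i : ℕ), hσ i⟩ t := by
    intro t
    rw [Matrix.mul_apply]
    rw [Finset.sum_eq_single (⟨sigmaES k q p (i : ℕ), hσ i⟩ : Fin (n + 1))]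
    · simp [Pmat]
    · intro s _ hs
      have : (s : ℕ) ≠ sigmaES k q p (i : ℕ) := fun h => hs (Fin.ext h)
      simp [Pmat, this]
    · simp
  rw [Matrix.mul_apply]
  rw [Finset.sum_eq_single (⟨sigmaES k q p (j : ℕ), hσ j⟩ : Fin (n + 1))]
  · rw [h1]; simp [Pmat, Matrix.transpose_apply]
  · intro s _ hs
    have : (s : ℕ) ≠ sigmaES k q p (j : ℕ) := fun h => hs (Fin.ext h)
    simp [Pmat, Matrix.transpose_apply, this]
  · simp

open Matrix in
/-- The Toeplitz case of the rearrangement: `P_σ A_{n+1,k,2k}(L,l,d,r,R) P_σᵀ` is the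
block-diagonal direct sum of `p` copies of the `(q+1) × (q+1)` Toeplitz `1,2`-pentadiagonal
matrix `A_{q+1,1,2}(L,l,d,r,R)` followed by `k - p` copies of the `q × q` Toeplitz
`1,2`-pentadiagonal matrix `A_{q,1,2}(L,l,d,r,R)` (entrywise formulation: the first `p`
diagonal blocks have size `q + 1`, the remaining `k - p` blocks size `q`, each block is the
Toeplitz `1,2`-pentadiagonal matrix, and entries across different blocks vanish). -/
theorem permuted_toeplitz_penta_eq_blockDiagonal (n k q p : ℕ) (hk : 1 ≤ k)
    (h2k : 2 * k ≤ n) (hqp : n + 1 = k * q + p) (hpk : p < k) (L l d r R : ℂ) :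
    Pmat n k q p *
        pentaMat (n + 1) k (fun _ => L) (fun _ => l) (fun _ => d) (fun _ => r)
          (fun _ => R) *
        (Pmat n k q p)ᵀ =
      Matrix.of fun i j : Fin (n + 1) =>
        if blockIdx q p (i : ℕ) = blockIdx q p (j : ℕ) then
          pentaFun 1 (fun _ => L) (fun _ => l) (fun _ => d) (fun _ => r) (fun _ => R)
            (locIdx q p (i : ℕ)) (locIdx q p (j : ℕ))
        else 0 := by
  have hq2 : 2 ≤ q := by
    by_contra h
    push_neg at h
    have : k * q ≤ k * 1 := Nat.mul_le_mul_left k (by omega)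
    omega
  have hq1 : 1 ≤ q := by omega
  have hi' : ∀ i : Fin (n + 1), (i : ℕ) < k * q + p := fun i => hqp ▸ i.isLt
  have hσ : ∀ i : Fin (n + 1), sigmaES k q p (i : ℕ) < n + 1 := by
    intro i
    exact lt_of_lt_of_eq (sigma_lt k q p i hq1 hpk (hi' i)) hqp.symm
  ext i j
  rw [Pmat_mul n k q p hσ]
  simp only [pentaMat, Matrix.of_apply]
  rw [sigma_eq, sigma_eq,
    penta_split k (locIdx q p i) (blockIdx q p i) (locIdx q p j) (blockIdx q p j) hk
      (block_lt k q p i hq1 hpk (hi' i)) (block_lt k q p j hq1 hpk (hi' j))]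
end

section
/- Let n, k be integers with 1 ≤ k and n+1 = 4k+p where 0 ≤ p < k, and let L, l, d, r, R be complex numbers. Then D_{n+1,k,2k}(L,l,d,r,R) = p5^p · p4^{k−p}, where p4 = d^4 − d^2(2LR + 3lr) + d(2Lr^2 + 2Rl^2) + L^2R^2 − 2LRlr + l^2r^2 and p5 = d^5 − d^3(3LR + 4lr) + d^2(3Lr^2 + 3Rl^2) + d(2L^2R^2 − 2LRlr + 3l^2r^2) + L^2Rr^2 + R^2Ll^2 − 2Llr^3 − 2Rrl^3. -/
private lemma penta_key {k : ℕ} (hk : 0 < k) {i i' a b : ℕ} (hi : i < k) (hi' : i' < k) :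
    a * k + i = b * k + i' ↔ a = b ∧ i = i' := by
  constructor
  · intro h
    have h1 : (k * a + i) % k = (k * b + i') % k := by
      rw [mul_comm k a, mul_comm k b, h]
    rw [Nat.mul_add_mod, Nat.mul_add_mod, Nat.mod_eq_of_lt hi, Nat.mod_eq_of_lt hi'] at h1
    subst h1
    have h2 : a * k = b * k := by omega
    exact ⟨Nat.eq_of_mul_eq_mul_right hk h2, rfl⟩
  · rintro ⟨rfl, rfl⟩; rfl

private lemma penta_entry {k : ℕ} (hk : 0 < k) {i i' : ℕ} (hi : i < k) (hi' : i' < k)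
    (j j' : ℕ) (L l d r R : ℂ) :
    pentaFun k (fun _ => L) (fun _ => l) (fun _ => d) (fun _ => r) (fun _ => R)
      (j * k + i) (j' * k + i') =
    if i = i' then
      pentaFun 1 (fun _ => L) (fun _ => l) (fun _ => d) (fun _ => r) (fun _ => R) j j'
    else 0 := by
  have e2 : (j' * k + i' + 2 * k = j * k + i) ↔ (j' + 2 = j ∧ i' = i) := by
    rw [show j' * k + i' + 2 * k = (j' + 2) * k + i' by ring]; exact penta_key hk hi' hi
  have e1 : (j' * k + i' + k = j * k + i) ↔ (j' + 1 = j ∧ i' = i) := by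
    rw [show j' * k + i' + k = (j' + 1) * k + i' by ring]; exact penta_key hk hi' hi
  have e0 : (j * k + i = j' * k + i') ↔ (j = j' ∧ i = i') := penta_key hk hi hi'
  have f1 : (j * k + i + k = j' * k + i') ↔ (j + 1 = j' ∧ i = i') := by
    rw [show j * k + i + k = (j + 1) * k + i by ring]; exact penta_key hk hi hi'
  have f2 : (j * k + i + 2 * k = j' * k + i') ↔ (j + 2 = j' ∧ i = i') := by
    rw [show j * k + i + 2 * k = (j + 2) * k + i by ring]; exact penta_key hk hi hi'
  by_cases hii : i = i'
  · subst hii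
    simp only [pentaFun, e2, e1, e0, f1, f2, and_true, if_pos rfl, mul_one, if_true]
  · simp [pentaFun, e2, e1, e0, f1, f2, hii, Ne.symm hii]

private lemma det_penta4 (m : ℕ) (hm : m = 4) (L l d r R : ℂ) :
    (pentaMat m 1 (fun _ => L) (fun _ => l) (fun _ => d) (fun _ => r) (fun _ => R)).det =
    d ^ 4 - d ^ 2 * (2 * L * R + 3 * l * r) + d * (2 * L * r ^ 2 + 2 * R * l ^ 2)
          + L ^ 2 * R ^ 2 - 2 * L * R * l * r + l ^ 2 * r ^ 2 := by
  subst hm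
  have : pentaMat 4 1 (fun _ => L) (fun _ => l) (fun _ => d) (fun _ => r) (fun _ => R) =
      !![d, r, R, 0; l, d, r, R; L, l, d, r; 0, L, l, d] := by
    ext i j
    fin_cases i <;> fin_cases j <;> norm_num [pentaMat, pentaFun]
  rw [this]
  simp [Matrix.det_succ_row_zero, Fin.sum_univ_succ, Fin.succAbove, Matrix.submatrix, Matrix.vecHead, Matrix.vecTail]
  ring

private lemma det_penta5 (m : ℕ) (hm : m = 5) (L l d r R : ℂ) :
    (pentaMat m 1 (fun _ => L) (fun _ => l) (fun _ => d) (fun _ => r) (fun _ => R)).det =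
    d ^ 5 - d ^ 3 * (3 * L * R + 4 * l * r) + d ^ 2 * (3 * L * r ^ 2 + 3 * R * l ^ 2)
          + d * (2 * L ^ 2 * R ^ 2 - 2 * L * R * l * r + 3 * l ^ 2 * r ^ 2)
          + L ^ 2 * R * r ^ 2 + R ^ 2 * L * l ^ 2 - 2 * L * l * r ^ 3
          - 2 * R * r * l ^ 3 := by
  subst hm
  have : pentaMat 5 1 (fun _ => L) (fun _ => l) (fun _ => d) (fun _ => r) (fun _ => R) =
      !![d, r, R, 0, 0; l, d, r, R, 0; L, l, d, r, R; 0, L, l, d, r; 0, 0, L, l, d] := by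
    ext i j
    fin_cases i <;> fin_cases j <;> norm_num [pentaMat, pentaFun]
  rw [this]
  simp [Matrix.det_succ_row_zero, Fin.sum_univ_succ, Fin.succAbove, Matrix.submatrix, Matrix.vecHead, Matrix.vecTail]
  ring


def pentaEquiv (n k p : ℕ) (hk : 1 ≤ k) (hnp : n + 1 = 4 * k + p) (hpk : p < k) :
    ((Fin 5 × Fin p) ⊕ (Fin 4 × Fin (k - p))) ≃ Fin (n + 1) where
  toFun x := match x with
    | Sum.inl (j, i) => ⟨(j : ℕ) * k + (i : ℕ), by
        have hj := j.isLt; have hi := i.isLt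
        have : (j : ℕ) * k ≤ 4 * k := Nat.mul_le_mul_right k (by omega)
        omega⟩
    | Sum.inr (j, i) => ⟨(j : ℕ) * k + (p + (i : ℕ)), by
        have hj := j.isLt; have hi := i.isLt
        have : (j : ℕ) * k ≤ 3 * k := Nat.mul_le_mul_right k (by omega)
        omega⟩
  invFun y :=
    if h : (y : ℕ) % k < p then
      Sum.inl (⟨(y : ℕ) / k, by
        have hy := y.isLt
        exact Nat.div_lt_of_lt_mul (by omega)⟩, ⟨(y : ℕ) % k, h⟩)
    else
      Sum.inr (⟨(y : ℕ) / k, by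
        have hy := y.isLt
        by_contra h4
        push_neg at h4
        have hd := Nat.div_add_mod (y : ℕ) k
        have h6 : k * 4 ≤ k * ((y : ℕ) / k) := Nat.mul_le_mul_left k h4
        have h7 : 4 * k + p ≤ (y : ℕ) := by
          calc 4 * k + p ≤ k * 4 + (y : ℕ) % k := by omega
          _ ≤ k * ((y : ℕ) / k) + (y : ℕ) % k := Nat.add_le_add_right h6 _
          _ = (y : ℕ) := hd
        omega⟩, ⟨(y : ℕ) % k - p, by
        have := Nat.mod_lt (y : ℕ) (show 0 < k by omega)
        omega⟩)
  left_inv := by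
    rintro (⟨⟨j, hj⟩, ⟨i, hi⟩⟩ | ⟨⟨j, hj⟩, ⟨i, hi⟩⟩)
    · have hik : i < k := by omega
      have hm : (j * k + i) % k = i := by
        rw [mul_comm, Nat.mul_add_mod, Nat.mod_eq_of_lt hik]
      have hd : (j * k + i) / k = j := by
        rw [mul_comm, Nat.mul_add_div hk, Nat.div_eq_of_lt hik, Nat.add_zero]
      simp only [hm, hd, dif_pos hi]
    · have hik : p + i < k := by omega
      have hm : (j * k + (p + i)) % k = p + i := by
        rw [mul_comm, Nat.mul_add_mod, Nat.mod_eq_of_lt hik]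
      have hd : (j * k + (p + i)) / k = j := by
        rw [mul_comm, Nat.mul_add_div hk, Nat.div_eq_of_lt hik, Nat.add_zero]
      have hnp' : ¬ p + i < p := by omega
      simp only [hm, hd, dif_neg hnp', Nat.add_sub_cancel_left]
  right_inv := by
    intro y
    by_cases h : (y : ℕ) % k < p
    · simp only [dif_pos h]
      apply Fin.ext
      show (y : ℕ) / k * k + (y : ℕ) % k = (y : ℕ)
      rw [mul_comm]; exact Nat.div_add_mod _ _
    · simp only [dif_neg h]
      apply Fin.ext
      show (y : ℕ) / k * k + (p + ((y : ℕ) % k - p)) = (y : ℕ)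
      have h2 : p + ((y : ℕ) % k - p) = (y : ℕ) % k := by omega
      rw [h2, mul_comm]; exact Nat.div_add_mod _ _

/-- The `q = 4` case of the Toeplitz factorization: for `n + 1 = 4k + p`, `0 ≤ p < k`,
`D_{n+1,k,2k}(L,l,d,r,R) = p₅^p ⬝ p₄^{k-p}`. -/
theorem det_toeplitz_q_eq_four (n k p : ℕ) (hk : 1 ≤ k) (hnp : n + 1 = 4 * k + p)
    (hpk : p < k) (L l d r R : ℂ) :
    (pentaMat (n + 1) k (fun _ => L) (fun _ => l) (fun _ => d) (fun _ => r)
        (fun _ => R)).det =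
      (d ^ 5 - d ^ 3 * (3 * L * R + 4 * l * r) + d ^ 2 * (3 * L * r ^ 2 + 3 * R * l ^ 2)
          + d * (2 * L ^ 2 * R ^ 2 - 2 * L * R * l * r + 3 * l ^ 2 * r ^ 2)
          + L ^ 2 * R * r ^ 2 + R ^ 2 * L * l ^ 2 - 2 * L * l * r ^ 3
          - 2 * R * r * l ^ 3) ^ p *
      (d ^ 4 - d ^ 2 * (2 * L * R + 3 * l * r) + d * (2 * L * r ^ 2 + 2 * R * l ^ 2)
          + L ^ 2 * R ^ 2 - 2 * L * R * l * r + l ^ 2 * r ^ 2) ^ (k - p) := by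
  classical
  set M5 := pentaMat 5 1 (fun _ => L) (fun _ => l) (fun _ => d) (fun _ => r) (fun _ => R)
    with hM5
  set M4 := pentaMat 4 1 (fun _ => L) (fun _ => l) (fun _ => d) (fun _ => r) (fun _ => R)
    with hM4
  set e := pentaEquiv n k p hk hnp hpk with he
  set N := Matrix.fromBlocks (Matrix.blockDiagonal fun _ : Fin p => M5) 0 0
    (Matrix.blockDiagonal fun _ : Fin (k - p) => M4) with hN
  have key : ∀ x y : (Fin 5 × Fin p) ⊕ (Fin 4 × Fin (k - p)),
      pentaFun k (fun _ => L) (fun _ => l) (fun _ => d) (fun _ => r) (fun _ => R)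
        ((e x : Fin (n + 1)) : ℕ) ((e y : Fin (n + 1)) : ℕ) = N x y := by
    rintro (⟨j, i⟩ | ⟨j, i⟩) (⟨j', i'⟩ | ⟨j', i'⟩)
    · have hxv : ((e (Sum.inl (j, i)) : Fin (n + 1)) : ℕ) = (j : ℕ) * k + (i : ℕ) := rfl
      have hyv : ((e (Sum.inl (j', i')) : Fin (n + 1)) : ℕ) = (j' : ℕ) * k + (i' : ℕ) := rfl
      rw [hxv, hyv, penta_entry hk (by omega : (i : ℕ) < k) (by omega : (i' : ℕ) < k)]
      show _ = Matrix.blockDiagonal (fun _ : Fin p => M5) (j, i) (j', i')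
      rw [Matrix.blockDiagonal_apply]
      by_cases h : i = i'
      · rw [if_pos h, if_pos (congrArg Fin.val h)]; rfl
      · rw [if_neg h, if_neg (fun hc => h (Fin.ext hc))]
    · have hxv : ((e (Sum.inl (j, i)) : Fin (n + 1)) : ℕ) = (j : ℕ) * k + (i : ℕ) := rfl
      have hyv : ((e (Sum.inr (j', i')) : Fin (n + 1)) : ℕ)
          = (j' : ℕ) * k + (p + (i' : ℕ)) := rfl
      rw [hxv, hyv, penta_entry hk (by omega : (i : ℕ) < k)
        (by have := i'.isLt; omega : p + (i' : ℕ) < k)]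
      rw [if_neg (by have := i.isLt; omega)]
      rfl
    · have hxv : ((e (Sum.inr (j, i)) : Fin (n + 1)) : ℕ) = (j : ℕ) * k + (p + (i : ℕ)) := rfl
      have hyv : ((e (Sum.inl (j', i')) : Fin (n + 1)) : ℕ) = (j' : ℕ) * k + (i' : ℕ) := rfl
      rw [hxv, hyv, penta_entry hk (by have := i.isLt; omega : p + (i : ℕ) < k)
        (by omega : (i' : ℕ) < k)]
      rw [if_neg (by have := i'.isLt; omega)]
      rfl
    · have hxv : ((e (Sum.inr (j, i)) : Fin (n + 1)) : ℕ) = (j : ℕ) * k + (p + (i : ℕ)) := rfl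
      have hyv : ((e (Sum.inr (j', i')) : Fin (n + 1)) : ℕ)
          = (j' : ℕ) * k + (p + (i' : ℕ)) := rfl
      rw [hxv, hyv, penta_entry hk (by have := i.isLt; omega : p + (i : ℕ) < k)
        (by have := i'.isLt; omega : p + (i' : ℕ) < k)]
      show _ = Matrix.blockDiagonal (fun _ : Fin (k - p) => M4) (j, i) (j', i')
      rw [Matrix.blockDiagonal_apply]
      by_cases h : i = i'
      · rw [if_pos (by rw [h]), if_pos h]; rfl
      · rw [if_neg (fun hc : p + (i : ℕ) = p + (i' : ℕ) => h (Fin.ext (by omega))),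
          if_neg h]
  have hblock : pentaMat (n + 1) k (fun _ => L) (fun _ => l) (fun _ => d) (fun _ => r)
      (fun _ => R) = Matrix.reindex e e N := by
    ext x y
    rw [Matrix.reindex_apply, Matrix.submatrix_apply]
    have hx : x = e (e.symm x) := (Equiv.apply_symm_apply e x).symm
    have hy : y = e (e.symm y) := (Equiv.apply_symm_apply e y).symm
    show pentaFun k (fun _ => L) (fun _ => l) (fun _ => d) (fun _ => r) (fun _ => R)
      (x : ℕ) (y : ℕ) = N (e.symm x) (e.symm y)
    have hkey := key (e.symm x) (e.symm y)
    rw [Equiv.apply_symm_apply, Equiv.apply_symm_apply] at hkey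
    exact hkey
  rw [hblock, Matrix.det_reindex_self, hN, Matrix.det_fromBlocks_zero₂₁,
    Matrix.det_blockDiagonal, Matrix.det_blockDiagonal,
    det_penta5 5 rfl L l d r R, det_penta4 4 rfl L l d r R,
    Finset.prod_const, Finset.prod_const, Finset.card_univ, Finset.card_univ,
    Fintype.card_fin, Fintype.card_fin]
end
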